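/- Let N, d ≥ 1, n_q ≥ 1, α ≥ 0, and 0 ≤ κ < 1. Let σ : ℝ → ℝ satisfy |σ(x) − σ(y)| ≤ |x − y| for all x, y, applied entrywise to matrices. Let Ã ∈ ℝ^{N×N}, W, Ω ∈ ℝ^{d×d}, H ∈ ℝ^{N×d}, b ∈ ℝ^{d} with ‖Ã‖₂ · ‖W‖₂ ≤ κ, and let 𝟏 ∈ ℝ^{N} be the all-ones vector; write h(Z) = σ(Ã Z Wᵀ + H Ωᵀ + 𝟏 bᵀ). Let W_in ∈ ℝ^{n_q×d}, W_out ∈ ℝ^{d×n_q}, and let f_M : ℝ^{n_q} → ℝ^{n_q} be a map each of whose scalar components f_M^{(j)} satisfies |f_M^{(j)}(u) − f_M^{(j)}(u')| ≤ 2 ‖u − u'‖₂ for all u, u'. Define q(s) = W_out · f_M(tanh(W_in s)), let Q : ℝ^{N×d} → ℝ^{N×d} apply q to each row, and define Φ(Z) = h(Z) + α Q(h(Z)). Then for all Z₁, Z₂ ∈ ℝ^{N×d}, ‖Φ(Z₁) − Φ(Z₂)‖_F ≤ κ (1 + 2 α √(n_q) ‖W_out‖₂ ‖W_in‖₂) ‖Z₁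 − Z₂‖_F; in particular, if κ (1 + 2 α √(n_q) ‖W_out‖₂ ‖W_in‖₂) < 1, then Φ has a unique fixed point to which Picard iteration converges from any initialization. -/

import Mathlib

open Matrix Filter Topology

/-- Frobenius norm of a real matrix. -/
noncomputable def frobNorm {m n : ℕ} (A : Matrix (Fin m) (Fin n) ℝ) : ℝ :=
  Real.sqrt (∑ i, ∑ j, (A i j) ^ 2)

/-- Spectral norm (operator norm induced by the Euclidean vector norm). -/
noncomputable def specNorm {m n : ℕ} (A : Matrix (Fin m) (Fin n) ℝ) : ℝ :=
  ‖LinearMap.toContinuousLinearMap (Matrix.toEuclideanLin A)‖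

/-- Euclidean norm of a real vector. -/
noncomputable def eucNorm {n : ℕ} (v : Fin n → ℝ) : ℝ :=
  Real.sqrt (∑ i, (v i) ^ 2)

/-! Each layer is Lipschitz in the Frobenius norm. An entrywise 1-Lipschitz activation does not
increase norms, so the backbone inherits the constant of `Z ↦ Ã Z Wᵀ`, and
`‖Ã Z Wᵀ‖_F ≤ ‖Ã‖₂ ‖W‖₂ ‖Z‖_F` because left and right multiplication act on columns and rows.
In `q`, `tanh` is 1-Lipschitz (`tanh' = 1 / cosh² ≤ 1`) and `f_M` is `2 √n_q`-Lipschitz, having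
`n_q` components that are each `2`-Lipschitz; applying `q` row by row keeps its constant
`2 √n_q ‖W_out‖₂ ‖W_in‖₂`. The residual form `Φ = (id + α Q) ∘ h` then has constant
`κ (1 + 2 α √n_q ‖W_out‖₂ ‖W_in‖₂)`, and Banach's fixed point theorem on `ℝ^{N×d}` applies. -/

section Norms

variable {m n k : ℕ}

lemma eucNorm_eq_norm_toLp (v : Fin n → ℝ) : eucNorm v = ‖WithLp.toLp 2 v‖ := by
  simp [eucNorm, EuclideanSpace.norm_eq]

lemma eucNorm_nonneg (v : Fin n → ℝ) : 0 ≤ eucNorm v := Real.sqrt_nonneg _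

lemma sq_eucNorm (v : Fin n → ℝ) : eucNorm v ^ 2 = ∑ i, v i ^ 2 :=
  Real.sq_sqrt (Finset.sum_nonneg fun _ _ => sq_nonneg _)

lemma specNorm_nonneg (A : Matrix (Fin m) (Fin n) ℝ) : 0 ≤ specNorm A := norm_nonneg _

lemma eucNorm_mulVec_le (A : Matrix (Fin m) (Fin n) ℝ) (v : Fin n → ℝ) :
    eucNorm (A *ᵥ v) ≤ specNorm A * eucNorm v := by
  rw [eucNorm_eq_norm_toLp, eucNorm_eq_norm_toLp]
  exact (LinearMap.toContinuousLinearMap (toEuclideanLin A)).le_opNorm (WithLp.toLp 2 v)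

lemma eucNorm_le_of_abs_le {v w : Fin n → ℝ} (h : ∀ i, |v i| ≤ |w i|) :
    eucNorm v ≤ eucNorm w :=
  Real.sqrt_le_sqrt <| Finset.sum_le_sum fun i _ => sq_le_sq.mpr (h i)

lemma eucNorm_le_sqrt_card_mul {v : Fin n → ℝ} {c : ℝ} (hc : 0 ≤ c) (h : ∀ i, |v i| ≤ c) :
    eucNorm v ≤ Real.sqrt n * c := by
  have hsum : ∑ i, v i ^ 2 ≤ n * c ^ 2 := by
    simpa using Finset.sum_le_sum fun i (_ : i ∈ Finset.univ) =>
      sq_le_sq.mpr ((h i).trans_eq (abs_of_nonneg hc).symm)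
  calc eucNorm v ≤ Real.sqrt (n * c ^ 2) := Real.sqrt_le_sqrt hsum
    _ = Real.sqrt n * c := by rw [Real.sqrt_mul n.cast_nonneg, Real.sqrt_sq hc]

lemma frobNorm_nonneg (A : Matrix (Fin m) (Fin n) ℝ) : 0 ≤ frobNorm A := Real.sqrt_nonneg _

lemma frobNorm_eq_sqrt_sum_sq_eucNorm (A : Matrix (Fin m) (Fin n) ℝ) :
    frobNorm A = Real.sqrt (∑ i, eucNorm (A i) ^ 2) := by
  simp only [frobNorm, sq_eucNorm]

lemma frobNorm_le_mul_of_eucNorm_row_le {A : Matrix (Fin m) (Fin n) ℝ}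
    {B : Matrix (Fin m) (Fin k) ℝ} {L : ℝ} (hL : 0 ≤ L)
    (h : ∀ i, eucNorm (A i) ≤ L * eucNorm (B i)) :
    frobNorm A ≤ L * frobNorm B := by
  have hsum : ∑ i, eucNorm (A i) ^ 2 ≤ L ^ 2 * ∑ i, eucNorm (B i) ^ 2 := by
    rw [Finset.mul_sum]
    gcongr with i
    rw [← mul_pow]
    exact pow_le_pow_left₀ (eucNorm_nonneg _) (h i) 2
  rw [frobNorm_eq_sqrt_sum_sq_eucNorm, frobNorm_eq_sqrt_sum_sq_eucNorm,
    ← Real.sqrt_sq hL, ← Real.sqrt_mul (sq_nonneg L)]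
  exact Real.sqrt_le_sqrt hsum

lemma frobNorm_le_of_abs_le {A B : Matrix (Fin m) (Fin n) ℝ} (h : ∀ i j, |A i j| ≤ |B i j|) :
    frobNorm A ≤ frobNorm B := by
  simpa using frobNorm_le_mul_of_eucNorm_row_le (L := 1) zero_le_one
    fun i => by simpa using eucNorm_le_of_abs_le (h i)

lemma frobNorm_transpose (A : Matrix (Fin m) (Fin n) ℝ) : frobNorm Aᵀ = frobNorm A := by
  rw [frobNorm, frobNorm, Finset.sum_comm]
  rfl

lemma frobNorm_mul_transpose_le (B : Matrix (Fin m) (Fin n) ℝ) (W : Matrix (Fin k) (Fin n) ℝ) :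
    frobNorm (B * Wᵀ) ≤ specNorm W * frobNorm B := by
  refine frobNorm_le_mul_of_eucNorm_row_le (specNorm_nonneg W) fun i => ?_
  have hrow : (B * Wᵀ) i = W *ᵥ B i := by
    ext j
    simp [mul_apply, mulVec, dotProduct, mul_comm]
  exact hrow ▸ eucNorm_mulVec_le W (B i)

lemma frobNorm_mul_le (A : Matrix (Fin m) (Fin n) ℝ) (B : Matrix (Fin n) (Fin k) ℝ) :
    frobNorm (A * B) ≤ specNorm A * frobNorm B := by
  rw [← frobNorm_transpose (A * B), ← frobNorm_transpose B, transpose_mul]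
  exact frobNorm_mul_transpose_le Bᵀ A

end Norms

lemma Real.hasDerivAt_tanh (x : ℝ) : HasDerivAt Real.tanh (1 / Real.cosh x ^ 2) x := by
  have h := (Real.hasDerivAt_sinh x).div (Real.hasDerivAt_cosh x) (Real.cosh_pos x).ne'
  rw [show Real.sinh / Real.cosh = Real.tanh from
    funext fun y => (Real.tanh_eq_sinh_div_cosh y).symm] at h
  refine h.congr_deriv ?_
  rw [← sq, ← sq, Real.cosh_sq_sub_sinh_sq]

lemma Real.abs_tanh_sub_tanh_le (x y : ℝ) : |Real.tanh x - Real.tanh y| ≤ |x - y| := by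
  simpa [Real.norm_eq_abs] using Convex.norm_image_sub_le_of_norm_hasDerivWithin_le (C := 1)
    (fun z _ => (Real.hasDerivAt_tanh z).hasDerivWithinAt)
    (fun z _ => by
      rw [Real.norm_eq_abs, abs_of_nonneg (by positivity), div_le_one (by positivity)]
      nlinarith [Real.one_le_cosh z])
    convex_univ (Set.mem_univ y) (Set.mem_univ x)

section Layers

variable {m n k l : ℕ}

lemma frobNorm_backbone_sub_le {σ : ℝ → ℝ} (hσ : ∀ x y : ℝ, |σ x - σ y| ≤ |x - y|)
    (A : Matrix (Fin k) (Fin m) ℝ) (W : Matrix (Fin l) (Fin n) ℝ) (C : Matrix (Fin k) (Fin l) ℝ)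
    (Z₁ Z₂ : Matrix (Fin m) (Fin n) ℝ) :
    frobNorm ((A * Z₁ * Wᵀ + C).map σ - (A * Z₂ * Wᵀ + C).map σ)
      ≤ specNorm A * specNorm W * frobNorm (Z₁ - Z₂) := by
  have hlin : A * Z₁ * Wᵀ - A * Z₂ * Wᵀ = A * ((Z₁ - Z₂) * Wᵀ) := by
    rw [← Matrix.mul_assoc, Matrix.mul_sub, Matrix.sub_mul]
  calc frobNorm ((A * Z₁ * Wᵀ + C).map σ - (A * Z₂ * Wᵀ + C).map σ)
      ≤ frobNorm (A * ((Z₁ - Z₂) * Wᵀ)) :=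
        frobNorm_le_of_abs_le fun i j => by
          simpa [← hlin] using hσ ((A * Z₁ * Wᵀ + C) i j) ((A * Z₂ * Wᵀ + C) i j)
    _ ≤ specNorm A * (specNorm W * frobNorm (Z₁ - Z₂)) :=
        (frobNorm_mul_le _ _).trans <|
          mul_le_mul_of_nonneg_left (frobNorm_mul_transpose_le _ _) (specNorm_nonneg A)
    _ = specNorm A * specNorm W * frobNorm (Z₁ - Z₂) := (mul_assoc _ _ _).symm

lemma eucNorm_quantumModule_sub_le {τ : ℝ → ℝ} (hτ : ∀ x y : ℝ, |τ x - τ y| ≤ |x - y|)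
    (Win : Matrix (Fin k) (Fin n) ℝ) (Wout : Matrix (Fin m) (Fin k) ℝ)
    {fM : (Fin k → ℝ) → (Fin k → ℝ)} {L : ℝ} (hL : 0 ≤ L)
    (hfM : ∀ (j : Fin k) (u u' : Fin k → ℝ), |fM u j - fM u' j| ≤ L * eucNorm (u - u'))
    (s s' : Fin n → ℝ) :
    eucNorm (Wout *ᵥ fM (fun j => τ ((Win *ᵥ s) j)) - Wout *ᵥ fM (fun j => τ ((Win *ᵥ s') j)))
      ≤ L * Real.sqrt k * specNorm Wout * specNorm Win * eucNorm (s - s') := by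
  set u : Fin k → ℝ := fun j => τ ((Win *ᵥ s) j)
  set u' : Fin k → ℝ := fun j => τ ((Win *ᵥ s') j)
  have hu : eucNorm (u - u') ≤ specNorm Win * eucNorm (s - s') :=
    calc eucNorm (u - u') ≤ eucNorm (Win *ᵥ (s - s')) :=
          eucNorm_le_of_abs_le fun j => by
            simpa [mulVec_sub] using hτ ((Win *ᵥ s) j) ((Win *ᵥ s') j)
      _ ≤ specNorm Win * eucNorm (s - s') := eucNorm_mulVec_le _ _
  have hf : eucNorm (fM u - fM u') ≤ Real.sqrt k * (L * eucNorm (u - u')) :=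
    eucNorm_le_sqrt_card_mul (mul_nonneg hL (eucNorm_nonneg _)) fun j => hfM j u u'
  calc eucNorm (Wout *ᵥ fM u - Wout *ᵥ fM u')
      ≤ specNorm Wout * eucNorm (fM u - fM u') := mulVec_sub Wout _ _ ▸ eucNorm_mulVec_le _ _
    _ ≤ specNorm Wout * (Real.sqrt k * (L * (specNorm Win * eucNorm (s - s')))) := by
        gcongr
        · exact specNorm_nonneg _
        · exact hf.trans (by gcongr)
    _ = L * Real.sqrt k * specNorm Wout * specNorm Win * eucNorm (s - s') := by ring

lemma frobNorm_rowwise_sub_le {q : (Fin n → ℝ) → (Fin k → ℝ)} {L : ℝ} (hL : 0 ≤ L)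
    (hq : ∀ s s', eucNorm (q s - q s') ≤ L * eucNorm (s - s'))
    {Q : Matrix (Fin m) (Fin n) ℝ → Matrix (Fin m) (Fin k) ℝ} (hQ : ∀ S i, Q S i = q (S i))
    (S₁ S₂ : Matrix (Fin m) (Fin n) ℝ) :
    frobNorm (Q S₁ - Q S₂) ≤ L * frobNorm (S₁ - S₂) :=
  frobNorm_le_mul_of_eucNorm_row_le hL fun i => by
    have hrow : (Q S₁ - Q S₂) i = q (S₁ i) - q (S₂ i) := by rw [← hQ, ← hQ]; rfl
    exact hrow ▸ hq (S₁ i) (S₂ i)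

end Layers

lemma norm_residual_sub_le {E F : Type*} [SeminormedAddCommGroup E] [SeminormedAddCommGroup F]
    [NormedSpace ℝ F] {h : E → F} {Q : F → F} {κ L α : ℝ} (hα : 0 ≤ α) (hL : 0 ≤ L)
    (hh : ∀ x y, ‖h x - h y‖ ≤ κ * ‖x - y‖) (hQ : ∀ u v, ‖Q u - Q v‖ ≤ L * ‖u - v‖) (x y : E) :
    ‖(h x + α • Q (h x)) - (h y + α • Q (h y))‖ ≤ κ * (1 + α * L) * ‖x - y‖ := by
  have hsplit : (h x + α • Q (h x)) - (h y + α • Q (h y))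
      = (h x - h y) + α • (Q (h x) - Q (h y)) := by
    rw [smul_sub]; abel
  calc ‖(h x + α • Q (h x)) - (h y + α • Q (h y))‖
      ≤ ‖h x - h y‖ + ‖α • (Q (h x) - Q (h y))‖ := hsplit ▸ norm_add_le _ _
    _ = ‖h x - h y‖ + α * ‖Q (h x) - Q (h y)‖ := by rw [norm_smul, Real.norm_of_nonneg hα]
    _ ≤ (1 + α * L) * ‖h x - h y‖ := by nlinarith [hQ (h x) (h y)]
    _ ≤ (1 + α * L) * (κ * ‖x - y‖) := by gcongr; exact hh x y
    _ = κ * (1 + α * L) * ‖x - y‖ := by ring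

lemma contractingWith_of_norm_sub_le {E : Type*} [NormedAddCommGroup E] {f : E → E} {K : ℝ}
    (hK0 : 0 ≤ K) (hK1 : K < 1) (hf : ∀ x y, ‖f x - f y‖ ≤ K * ‖x - y‖) :
    ContractingWith ⟨K, hK0⟩ f :=
  ⟨hK1, LipschitzWith.of_dist_le_mul fun x y => by
    rw [dist_eq_norm, dist_eq_norm]; exact hf x y⟩

lemma ContractingWith.exists_fixedPoint_unique_tendsto_iterate {X : Type*} [MetricSpace X]
    [CompleteSpace X] [Nonempty X] {K : NNReal} {f : X → X} (hf : ContractingWith K f) :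
    ∃ z, f z = z ∧ (∀ x, f x = x → x = z) ∧ ∀ x₀, Tendsto (fun t => f^[t] x₀) atTop (𝓝 z) :=
  ⟨fixedPoint f hf, hf.fixedPoint_isFixedPt, fun _ hx => hf.fixedPoint_unique hx,
    hf.tendsto_iterate_fixedPoint⟩

section Frobenius

attribute [local instance] Matrix.frobeniusNormedAddCommGroup Matrix.frobeniusNormedSpace

variable {m n k l : ℕ}

lemma frobNorm_eq_norm (A : Matrix (Fin m) (Fin n) ℝ) : frobNorm A = ‖A‖ := by
  simp [frobenius_norm_def, frobNorm, Real.sqrt_eq_rpow]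

lemma frobNorm_residual_sub_le {h : Matrix (Fin m) (Fin n) ℝ → Matrix (Fin k) (Fin l) ℝ}
    {Q : Matrix (Fin k) (Fin l) ℝ → Matrix (Fin k) (Fin l) ℝ} {κ L α : ℝ} (hα : 0 ≤ α)
    (hL : 0 ≤ L) (hh : ∀ Z₁ Z₂, frobNorm (h Z₁ - h Z₂) ≤ κ * frobNorm (Z₁ - Z₂))
    (hQ : ∀ S₁ S₂, frobNorm (Q S₁ - Q S₂) ≤ L * frobNorm (S₁ - S₂))
    (Z₁ Z₂ : Matrix (Fin m) (Fin n) ℝ) :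
    frobNorm ((h Z₁ + α • Q (h Z₁)) - (h Z₂ + α • Q (h Z₂)))
      ≤ κ * (1 + α * L) * frobNorm (Z₁ - Z₂) := by
  simp only [frobNorm_eq_norm] at hh hQ ⊢
  exact norm_residual_sub_le hα hL hh hQ Z₁ Z₂

lemma exists_fixedPoint_unique_tendsto_iterate_of_frobNorm_sub_le
    {f : Matrix (Fin m) (Fin n) ℝ → Matrix (Fin m) (Fin n) ℝ} {K : ℝ} (hK0 : 0 ≤ K) (hK1 : K < 1)
    (hf : ∀ Z₁ Z₂, frobNorm (f Z₁ - f Z₂) ≤ K * frobNorm (Z₁ - Z₂)) :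
    ∃ z, f z = z ∧ (∀ Z, f Z = Z → Z = z) ∧ ∀ Z₀, Tendsto (fun t => f^[t] Z₀) atTop (𝓝 z) := by
  simp only [frobNorm_eq_norm] at hf
  exact (contractingWith_of_norm_sub_le hK0 hK1 hf).exists_fixedPoint_unique_tendsto_iterate

end Frobenius

theorem explicit_backbone_dependent_injection_general
    (N d nq : ℕ)
    (α κ : ℝ) (hα : 0 ≤ α) (hκ0 : 0 ≤ κ)
    (σ : ℝ → ℝ) (hσ : ∀ x y : ℝ, |σ x - σ y| ≤ |x - y|)
    (Atil : Matrix (Fin N) (Fin N) ℝ) (W Ω : Matrix (Fin d) (Fin d) ℝ)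
    (H : Matrix (Fin N) (Fin d) ℝ) (b : Fin d → ℝ)
    (hAW : specNorm Atil * specNorm W ≤ κ)
    (h : Matrix (Fin N) (Fin d) ℝ → Matrix (Fin N) (Fin d) ℝ)
    (hh : ∀ Z, h Z =
      (Atil * Z * Wᵀ + H * Ωᵀ + Matrix.vecMulVec (fun _ => (1 : ℝ)) b).map σ)
    (Win : Matrix (Fin nq) (Fin d) ℝ) (Wout : Matrix (Fin d) (Fin nq) ℝ)
    (fM : (Fin nq → ℝ) → (Fin nq → ℝ))
    (hfM : ∀ (j : Fin nq) (u u' : Fin nq → ℝ),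
      |fM u j - fM u' j| ≤ 2 * eucNorm (u - u'))
    (q : (Fin d → ℝ) → (Fin d → ℝ))
    (hqdef : ∀ s, q s = Wout.mulVec (fM (fun j => Real.tanh (Win.mulVec s j))))
    (Q : Matrix (Fin N) (Fin d) ℝ → Matrix (Fin N) (Fin d) ℝ)
    (hQ : ∀ (S : Matrix (Fin N) (Fin d) ℝ) (i : Fin N), Q S i = q (S i))
    (Φ : Matrix (Fin N) (Fin d) ℝ → Matrix (Fin N) (Fin d) ℝ)
    (hΦ : ∀ Z, Φ Z = h Z + α • Q (h Z)) :
    (∀ Z₁ Z₂ : Matrix (Fin N) (Fin d) ℝ,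
        frobNorm (Φ Z₁ - Φ Z₂) ≤
          κ * (1 + 2 * α * Real.sqrt nq * specNorm Wout * specNorm Win)
            * frobNorm (Z₁ - Z₂)) ∧
    (κ * (1 + 2 * α * Real.sqrt nq * specNorm Wout * specNorm Win) < 1 →
      ∃ Zstar : Matrix (Fin N) (Fin d) ℝ,
        Φ Zstar = Zstar ∧
        (∀ Z, Φ Z = Z → Z = Zstar) ∧
        (∀ Z₀ : Matrix (Fin N) (Fin d) ℝ,
          Tendsto (fun t => Φ^[t] Z₀) atTop (nhds Zstar))) := by
  set Lq := 2 * Real.sqrt nq * specNorm Wout * specNorm Win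
  have hLq : 0 ≤ Lq := by
    have := specNorm_nonneg Wout
    have := specNorm_nonneg Win
    positivity
  have hh_lip : ∀ Z₁ Z₂, frobNorm (h Z₁ - h Z₂) ≤ κ * frobNorm (Z₁ - Z₂) := fun Z₁ Z₂ => by
    simp only [hh, add_assoc]
    exact (frobNorm_backbone_sub_le hσ Atil W _ Z₁ Z₂).trans
      (mul_le_mul_of_nonneg_right hAW (frobNorm_nonneg _))
  have hq_lip : ∀ s s', eucNorm (q s - q s') ≤ Lq * eucNorm (s - s') := fun s s' => by
    simpa only [hqdef] using
      eucNorm_quantumModule_sub_le Real.abs_tanh_sub_tanh_le Win Wout zero_le_two hfM s s'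
  have hΦ_lip : ∀ Z₁ Z₂, frobNorm (Φ Z₁ - Φ Z₂) ≤ κ * (1 + α * Lq) * frobNorm (Z₁ - Z₂) :=
    fun Z₁ Z₂ => hΦ Z₁ ▸ hΦ Z₂ ▸
      frobNorm_residual_sub_le hα hLq hh_lip (frobNorm_rowwise_sub_le hLq hq_lip hQ) Z₁ Z₂
  have hK : κ * (1 + 2 * α * Real.sqrt nq * specNorm Wout * specNorm Win) = κ * (1 + α * Lq) := by
    ring
  rw [hK]
  exact ⟨hΦ_lip, fun hK1 =>
    exists_fixedPoint_unique_tendsto_iterate_of_frobNorm_sub_le (by positivity) hK1 hΦ_lip⟩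

theorem explicit_backbone_dependent_injection
    (N d nq : ℕ) (hN : 1 ≤ N) (hd : 1 ≤ d) (hnq : 1 ≤ nq)
    (α κ : ℝ) (hα : 0 ≤ α) (hκ0 : 0 ≤ κ) (hκ1 : κ < 1)
    (σ : ℝ → ℝ) (hσ : ∀ x y : ℝ, |σ x - σ y| ≤ |x - y|)
    (Atil : Matrix (Fin N) (Fin N) ℝ) (W Ω : Matrix (Fin d) (Fin d) ℝ)
    (H : Matrix (Fin N) (Fin d) ℝ) (b : Fin d → ℝ)
    (hAW : specNorm Atil * specNorm W ≤ κ)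
    (h : Matrix (Fin N) (Fin d) ℝ → Matrix (Fin N) (Fin d) ℝ)
    (hh : ∀ Z, h Z =
      (Atil * Z * Wᵀ + H * Ωᵀ + Matrix.vecMulVec (fun _ => (1 : ℝ)) b).map σ)
    (Win : Matrix (Fin nq) (Fin d) ℝ) (Wout : Matrix (Fin d) (Fin nq) ℝ)
    (fM : (Fin nq → ℝ) → (Fin nq → ℝ))
    (hfM : ∀ (j : Fin nq) (u u' : Fin nq → ℝ),
      |fM u j - fM u' j| ≤ 2 * eucNorm (u - u'))
    (q : (Fin d → ℝ) → (Fin d → ℝ))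
    (hqdef : ∀ s, q s = Wout.mulVec (fM (fun j => Real.tanh (Win.mulVec s j))))
    (Q : Matrix (Fin N) (Fin d) ℝ → Matrix (Fin N) (Fin d) ℝ)
    (hQ : ∀ (S : Matrix (Fin N) (Fin d) ℝ) (i : Fin N), Q S i = q (S i))
    (Φ : Matrix (Fin N) (Fin d) ℝ → Matrix (Fin N) (Fin d) ℝ)
    (hΦ : ∀ Z, Φ Z = h Z + α • Q (h Z)) :
    (∀ Z₁ Z₂ : Matrix (Fin N) (Fin d) ℝ,
        frobNorm (Φ Z₁ - Φ Z₂) ≤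
          κ * (1 + 2 * α * Real.sqrt nq * specNorm Wout * specNorm Win)
            * frobNorm (Z₁ - Z₂)) ∧
    (κ * (1 + 2 * α * Real.sqrt nq * specNorm Wout * specNorm Win) < 1 →
      ∃ Zstar : Matrix (Fin N) (Fin d) ℝ,
        Φ Zstar = Zstar ∧
        (∀ Z, Φ Z = Z → Z = Zstar) ∧
        (∀ Z₀ : Matrix (Fin N) (Fin d) ℝ,
          Tendsto (fun t => Φ^[t] Z₀) atTop (nhds Zstar))) :=
  explicit_backbone_dependent_injection_general N d nq α κ hα hκ0 σ hσ Atil W Ω H b hAW h hh Win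
    Wout fM hfM q hqdef Q hQ Φ hΦ
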